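/- Let A : ℝ → ℝ be a convex piecewise linear function with nondecreasing vertices {v_i}_{i ∈ [j]} and slopes {t_i}_{i=0}^{j} (t_i is the slope between v_i and v_{i+1}, with t_0 and t_j the leftmost and rightmost slopes). Suppose t_{ℓ-1} ≤ −1 ≤ t_ℓ and t_{r-1} ≤ 1 ≤ t_r. Then for any z, d ∈ ℝ, the minimizer w* of w ↦ |w − z − d| + A(w) is: w* = z + d if z + d ∈ [v_ℓ, v_r]; w* = v_ℓ if z + d < v_ℓ; and w* = v_r if z + d > v_r. -/

import Mathlib

/-! Since the slopes increase, `A` has slope at most `t i` to the left of `v i` and at least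
`t (i + 1)` to its right, by gluing adjacent pieces one vertex at a time. A point `x` minimizes
`|w - c| + A w` once these one-sided slopes of `A` at `x` beat those of `|· - c|`: to the left at
most `-1`, or `1` if `x ≤ c`; to the right at least `1`, or `-1` if `c ≤ x`. For `c = z + d`
this holds at `c` itself, at `v ℓ`, or at `v r`, according to where `c` lies. -/

theorem sub_le_mul_sub_of_glue {f : ℝ → ℝ} {p q s s' : ℝ} (hss' : s ≤ s')
    (hl : ∀ a b, a ≤ b → b ≤ p → f b - f a ≤ s * (b - a))
    (hm : ∀ a b, p ≤ a → a ≤ b → b ≤ q → f b - f a ≤ s' * (b - a))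
    {a b : ℝ} (hab : a ≤ b) (hbq : b ≤ q) : f b - f a ≤ s' * (b - a) := by
  rcases le_total b p with hbp | hpb
  · calc f b - f a ≤ s * (b - a) := hl a b hab hbp
      _ ≤ s' * (b - a) := mul_le_mul_of_nonneg_right hss' (sub_nonneg.2 hab)
  rcases le_total a p with hap | hpa
  · have h₁ := hl a p hap le_rfl
    have h₂ := hm p b le_rfl hpb hbq
    nlinarith
  · exact hm a b hpa hab hbq

theorem mul_sub_le_sub_of_glue {f : ℝ → ℝ} {p q s s' : ℝ} (hss' : s ≤ s')
    (hm : ∀ a b, p ≤ a → a ≤ b → b ≤ q → s * (b - a) ≤ f b - f a)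
    (hr : ∀ a b, q ≤ a → a ≤ b → s' * (b - a) ≤ f b - f a)
    {a b : ℝ} (hpa : p ≤ a) (hab : a ≤ b) : s * (b - a) ≤ f b - f a := by
  rcases le_total q a with hqa | haq
  · calc s * (b - a) ≤ s' * (b - a) := mul_le_mul_of_nonneg_right hss' (sub_nonneg.2 hab)
      _ ≤ f b - f a := hr a b hqa hab
  rcases le_total q b with hqb | hbq
  · have h₁ := hm a q hpa haq le_rfl
    have h₂ := hr q b le_rfl hqb
    nlinarith
  · exact hm a b hpa hab hbq

theorem abs_sub_add_le_abs_sub_add {f : ℝ → ℝ} {c x s s' : ℝ}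
    (hl : ∀ w, w ≤ x → f x - f w ≤ s * (x - w))
    (hr : ∀ w, x ≤ w → s' * (w - x) ≤ f w - f x)
    (hs : s ≤ 1) (hs' : -1 ≤ s') (hs_of_lt : c < x → s ≤ -1) (hs'_of_gt : x < c → 1 ≤ s')
    (w : ℝ) : |x - c| + f x ≤ |w - c| + f w := by
  have htri : |x - c| ≤ |x - w| + |w - c| := abs_sub_le x w c
  rcases le_total w x with hwx | hxw
  · have hslope := hl w hwx
    rw [abs_of_nonneg (sub_nonneg.2 hwx)] at htri
    rcases lt_or_ge c x with hcx | hxc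
    · nlinarith [hs_of_lt hcx]
    · rw [abs_of_nonpos (sub_nonpos.2 hxc), abs_of_nonpos (by linarith : w - c ≤ 0)]
      nlinarith
  · have hslope := hr w hxw
    rw [abs_of_nonpos (sub_nonpos.2 hxw)] at htri
    rcases lt_or_ge x c with hxc | hcx
    · nlinarith [hs'_of_gt hxc]
    · rw [abs_of_nonneg (sub_nonneg.2 hcx), abs_of_nonneg (by linarith : 0 ≤ w - c)]
      nlinarith

section PiecewiseLinear

variable {j : ℕ} {A : ℝ → ℝ} {v : Fin j → ℝ} {t : Fin (j + 1) → ℝ}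

theorem sub_le_mul_sub_of_le_vertex (hj : 1 ≤ j) (ht : Monotone t)
    (hleft : ∀ z w : ℝ, z ≤ w → w ≤ v ⟨0, hj⟩ → A w - A z = t 0 * (w - z))
    (hmid : ∀ (i : ℕ) (h : i + 1 < j), ∀ z w : ℝ,
      v ⟨i, Nat.lt_of_succ_lt h⟩ ≤ z → z ≤ w → w ≤ v ⟨i + 1, h⟩ →
      A w - A z = t ⟨i + 1, Nat.lt_of_succ_lt (Nat.succ_lt_succ h)⟩ * (w - z))
    (i : Fin j) {a b : ℝ} (hab : a ≤ b) (hb : b ≤ v i) :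
    A b - A a ≤ t i.castSucc * (b - a) := by
  obtain ⟨i, hi⟩ := i
  induction i generalizing a b with
  | zero => exact (hleft a b hab hb).le
  | succ i ih =>
    exact sub_le_mul_sub_of_glue (ht (Fin.mk_le_mk.2 i.le_succ)) (fun a b hab hb => ih hab _ hb)
      (fun a b ha hab hb => (hmid i hi a b ha hab hb).le) hab hb

theorem mul_sub_le_sub_of_vertex_le (hj : 1 ≤ j) (ht : Monotone t)
    (hmid : ∀ (i : ℕ) (h : i + 1 < j), ∀ z w : ℝ,
      v ⟨i, Nat.lt_of_succ_lt h⟩ ≤ z → z ≤ w → w ≤ v ⟨i + 1, h⟩ →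
      A w - A z = t ⟨i + 1, Nat.lt_of_succ_lt (Nat.succ_lt_succ h)⟩ * (w - z))
    (hright : ∀ z w : ℝ, v ⟨j - 1, Nat.sub_lt hj one_pos⟩ ≤ z → z ≤ w →
      A w - A z = t (Fin.last j) * (w - z))
    (i : Fin j) {a b : ℝ} (ha : v i ≤ a) (hab : a ≤ b) :
    t i.succ * (b - a) ≤ A b - A a := by
  obtain ⟨i, hi⟩ := i
  have hij : i ≤ j - 1 := by omega
  induction hij using Nat.decreasingInduction generalizing a b with
  | self =>
    have hlast : (⟨j - 1, hi⟩ : Fin j).succ = Fin.last j := Fin.ext (Nat.sub_add_cancel hj)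
    rw [hlast]
    exact (hright a b ha hab).ge
  | of_succ i hi' ih =>
    have hi₁ : i + 1 < j := by omega
    exact mul_sub_le_sub_of_glue (ht (Fin.mk_le_mk.2 i.succ.le_succ))
      (fun a b ha hab hb => (hmid i hi₁ a b ha hab hb).ge)
      (fun a b ha hab => ih hab hi₁ ha) ha hab

end PiecewiseLinear

theorem stmt9 (j : ℕ) (hj : 1 ≤ j) (A : ℝ → ℝ)
    (v : Fin j → ℝ)
    (t : Fin (j + 1) → ℝ) (ht : Monotone t)
    -- `A` has slope `t 0` to the left of the first vertex
    (hleft : ∀ z w : ℝ, z ≤ w → w ≤ v ⟨0, hj⟩ → A w - A z = t 0 * (w - z))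
    -- `A` has slope `t i` between the `i`-th and `(i+1)`-th vertices
    (hmid : ∀ (i : ℕ) (h : i + 1 < j), ∀ z w : ℝ,
      v ⟨i, Nat.lt_of_succ_lt h⟩ ≤ z → z ≤ w → w ≤ v ⟨i + 1, h⟩ →
      A w - A z = t ⟨i + 1, Nat.lt_of_succ_lt (Nat.succ_lt_succ h)⟩ * (w - z))
    -- `A` has slope `t j` to the right of the last vertex
    (hright : ∀ z w : ℝ, v ⟨j - 1, Nat.sub_lt hj one_pos⟩ ≤ z → z ≤ w →
      A w - A z = t (Fin.last j) * (w - z))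
    (ℓ r : Fin j)
    (hℓ : t ℓ.castSucc ≤ -1 ∧ -1 ≤ t ℓ.succ)
    (hr : t r.castSucc ≤ 1 ∧ 1 ≤ t r.succ)
    (z d : ℝ) :
    ((v ℓ ≤ z + d ∧ z + d ≤ v r) → ∀ w : ℝ, |z + d - z - d| + A (z + d) ≤ |w - z - d| + A w) ∧
    (z + d < v ℓ → ∀ w : ℝ, |v ℓ - z - d| + A (v ℓ) ≤ |w - z - d| + A w) ∧
    (v r < z + d → ∀ w : ℝ, |v r - z - d| + A (v r) ≤ |w - z - d| + A w) := by
  have left_of {i : Fin j} {x : ℝ} (hx : x ≤ v i) (w : ℝ) (hw : w ≤ x) :=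
    sub_le_mul_sub_of_le_vertex hj ht hleft hmid i hw hx
  have right_of {i : Fin j} {x : ℝ} (hx : v i ≤ x) (w : ℝ) (hw : x ≤ w) :=
    mul_sub_le_sub_of_vertex_le hj ht hmid hright i hx hw
  simp only [sub_sub]
  refine ⟨fun ⟨hℓx, hxr⟩ => ?_, fun hxℓ => ?_, fun hrx => ?_⟩
  · exact abs_sub_add_le_abs_sub_add (left_of hxr) (right_of hℓx) hr.1 hℓ.2
      (fun h => absurd h (lt_irrefl _)) (fun h => absurd h (lt_irrefl _))
  · exact abs_sub_add_le_abs_sub_add (left_of le_rfl) (right_of le_rfl) (hℓ.1.trans (by norm_num))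
      hℓ.2 (fun _ => hℓ.1) (fun h => absurd hxℓ h.not_gt)
  · exact abs_sub_add_le_abs_sub_add (left_of le_rfl) (right_of le_rfl) hr.1
      ((by norm_num : (-1 : ℝ) ≤ 1).trans hr.2) (fun h => absurd hrx h.not_gt) (fun _ => hr.2)
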